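/- arXiv:2404.00324 — 4 statements merged into one kernel-verified Lean document; each statement's English description precedes it below -/
import Mathlib

section
/- If φ is a ℤ/3-flow on G and v is a vertex such that either deg(v) ≠ 3, or deg(v) = 3 and φ is nonzero on all edges incident with v, then ⟨c, φ⟩ = 0 for every c in the subspace Δ_v. -/
open Finset

/-- A multigraph with a fixed orientation of its edges: each edge has a
tail and a head. -/
structure MultiGraph where
  V : Type
  E : Type
  [fV : Fintype V]
  [fE : Fintype E]
  [dV : DecidableEq V]
  [dE : DecidableEq E]
  tail : E → V
  head : E → V

namespace MultiGraph

attribute [instance] fV fE dV dE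

variable (G : MultiGraph)

/-- The incidence sign `[v,e]`: `1` if `e` is oriented towards `v`, `-1` if
oriented away from `v`, `0` otherwise (so `0` on loops). -/
def sign (v : G.V) (e : G.E) : ℤ :=
  (if G.head e = v then 1 else 0) - (if G.tail e = v then 1 else 0)

/-- A flow with values in an abelian group: conservation at every vertex. -/
def IsFlow {A : Type*} [AddCommGroup A] (φ : G.E → A) : Prop :=
  ∀ v : G.V, ∑ e : G.E, G.sign v e • φ e = 0

/-- A nowhere-zero flow. -/
def IsNZFlow {A : Type*} [AddCommGroup A] (φ : G.E → A) : Prop :=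
  G.IsFlow φ ∧ ∀ e : G.E, φ e ≠ 0

/-- `G` admits a nowhere-zero `A`-flow. -/
def HasNZFlow (A : Type*) [AddCommGroup A] : Prop :=
  ∃ φ : G.E → A, G.IsNZFlow φ

/-- Two vertices are joined by an edge (in either direction). -/
def Adj (a b : G.V) : Prop :=
  ∃ e : G.E, (G.tail e = a ∧ G.head e = b) ∨ (G.tail e = b ∧ G.head e = a)

/-- `G` is connected. -/
def Connected : Prop :=
  Nonempty G.V ∧ ∀ a b : G.V, Relation.ReflTransGen G.Adj a b

/-- Contraction of a set of edges: the contracted edges are removed and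
their endpoints identified. -/
noncomputable def contract (S : Set G.E) : MultiGraph := by
  classical
  exact
  { V := Quot (fun a b : G.V => ∃ e ∈ S, G.tail e = a ∧ G.head e = b)
    E := {e : G.E // e ∉ S}
    fV := Fintype.ofSurjective (Quot.mk _) (Quot.mk_surjective)
    tail := fun e => Quot.mk _ (G.tail e.1)
    head := fun e => Quot.mk _ (G.head e.1) }

/-- `G` is `A`-flow-critical: `G` is connected, has no nowhere-zero `A`-flow,
but every single-edge contraction does. -/
noncomputable def FlowCritical (A : Type*) [AddCommGroup A] : Prop :=
  G.Connected ∧ ¬ G.HasNZFlow A ∧ ∀ e : G.E, (G.contract {e}).HasNZFlow A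

/-- The degree of a vertex (loops counted twice). -/
def degree (v : G.V) : ℕ :=
  (univ.filter fun e : G.E => G.tail e = v).card +
    (univ.filter fun e : G.E => G.head e = v).card

/-- Incidence of a vertex and an edge. -/
def Incident (v : G.V) (e : G.E) : Prop := G.tail e = v ∨ G.head e = v

/-- The vector `δ_v ∈ (ℤ/3)^{E(G)}`, `δ_v(e) = [v,e]`. -/
def deltaV (v : G.V) : G.E → ZMod 3 := fun e => (G.sign v e : ZMod 3)

/-- The vector `δ_{v,e₁,e₂}`: `[v,e₁]` on `e₁`, `-[v,e₂]` on `e₂`, `0` elsewhere. -/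
def deltaPair (v : G.V) (e₁ e₂ : G.E) : G.E → ZMod 3 := fun e =>
  if e = e₁ then (G.sign v e₁ : ZMod 3)
  else if e = e₂ then -(G.sign v e₂ : ZMod 3) else 0

/-- The dot product on `(ℤ/3)^{E(G)}`. -/
def dot (c φ : G.E → ZMod 3) : ZMod 3 := ∑ e : G.E, c e * φ e

/-- The subspace `Δ_v`: the span of `δ_v` if `deg v ≠ 3`, and the span of `δ_v`
together with the vectors `δ_{v,e₁,e₂}` for incident edges if `deg v = 3`. -/
def DeltaSub (v : G.V) : Submodule (ZMod 3) (G.E → ZMod 3) :=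
  if G.degree v = 3 then
    Submodule.span (ZMod 3) ({G.deltaV v} ∪
      {x | ∃ e₁ e₂ : G.E, e₁ ≠ e₂ ∧ G.Incident v e₁ ∧ G.Incident v e₂ ∧
        x = G.deltaPair v e₁ e₂})
  else Submodule.span (ZMod 3) {G.deltaV v}

/-- Isomorphism of multigraphs (edges may be reversed, since the orientation
is an arbitrary fixed choice). -/
def Iso (G H : MultiGraph) : Prop :=
  ∃ (f : G.V ≃ H.V) (g : G.E ≃ H.E), ∀ e : G.E,
    (H.tail (g e) = f (G.tail e) ∧ H.head (g e) = f (G.head e)) ∨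
    (H.tail (g e) = f (G.head e) ∧ H.head (g e) = f (G.tail e))

/-- The graph with two vertices joined by `m` parallel edges. -/
def banana (m : ℕ) : MultiGraph where
  V := Bool
  E := Fin m
  tail := fun _ => false
  head := fun _ => true

/-- The wheel `W_k`: a cycle on `k` vertices plus a hub (`none`) adjacent to all
of them.  `Sum.inl` are the cycle edges, `Sum.inr` the spokes. -/
def wheel (k : ℕ) : MultiGraph where
  V := Option (Fin k)
  E := Fin k ⊕ Fin k
  tail := fun e => Sum.elim (fun i => some i) (fun i => some i) e
  head := fun e => Sum.elim (fun i => some (finRotate k i)) (fun _ => none) e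

/-- `K₂`. -/
def K2 : MultiGraph := banana 1

/-- `K₄` (the wheel on `3 + 1` vertices). -/
def K4 : MultiGraph := wheel 3

/-- `G` is a wheel. -/
def IsWheel : Prop := ∃ k : ℕ, 3 ≤ k ∧ Iso G (wheel k)

end MultiGraph

namespace MultiGraph

variable (G : MultiGraph)

/-- Indicator count of incidences of `v` with `e` (2 for a loop). -/
def ind (v : G.V) (e : G.E) : ℕ :=
  (if G.tail e = v then 1 else 0) + (if G.head e = v then 1 else 0)

lemma sum_ind (v : G.V) : ∑ e : G.E, G.ind v e = G.degree v := by
  rw [degree, card_filter, card_filter, ← Finset.sum_add_distrib]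
  rfl

lemma ind_le_two (v : G.V) (e : G.E) : G.ind v e ≤ 2 := by
  unfold ind; split_ifs <;> omega

lemma ind_pos_of_incident {v : G.V} {e : G.E} (h : G.Incident v e) : 1 ≤ G.ind v e := by
  unfold ind; rcases h with h | h <;> split_ifs <;> omega

lemma incident_of_ind_pos {v : G.V} {e : G.E} (h : G.ind v e ≠ 0) : G.Incident v e := by
  unfold ind at h
  unfold Incident
  split_ifs at h <;> tauto

lemma sign_eq_zero_of_ind_eq_zero {v : G.V} {e : G.E} (h : G.ind v e = 0) :
    G.sign v e = 0 := by
  unfold ind at h; unfold sign; split_ifs at h ⊢ <;> simp_all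

lemma sign_eq_zero_of_ind_eq_two {v : G.V} {e : G.E} (h : G.ind v e = 2) :
    G.sign v e = 0 := by
  unfold ind at h; unfold sign; split_ifs at h ⊢ <;> simp_all

lemma sign_cases_of_ind_eq_one {v : G.V} {e : G.E} (h : G.ind v e = 1) :
    G.sign v e = 1 ∨ G.sign v e = -1 := by
  unfold ind at h; unfold sign; split_ifs at h ⊢ <;> simp_all

end MultiGraph

private lemma zmod3_aux : ∀ x y z : ZMod 3, x ≠ 0 → y ≠ 0 → z ≠ 0 →
    z + (x + y) = 0 → x = y := by decide

open MultiGraph in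
/-- If `φ` is a `ℤ/3`-flow on `G` and `v` is a vertex such that either
`deg v ≠ 3`, or `deg v = 3` and `φ` is nonzero on all edges incident with `v`,
then `⟨c, φ⟩ = 0` for every `c ∈ Δ_v`. -/
theorem dot_eq_zero_of_mem_deltaSub (G : MultiGraph) (φ : G.E → ZMod 3)
    (hφ : G.IsFlow φ) (v : G.V)
    (hv : G.degree v ≠ 3 ∨ (G.degree v = 3 ∧ ∀ e : G.E, G.Incident v e → φ e ≠ 0)) :
    ∀ c ∈ G.DeltaSub v, G.dot c φ = 0 := by
  classical
  intro c hc
  set F : G.E → ZMod 3 := fun e => (G.sign v e : ZMod 3) * φ e with hF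
  have hflow3 : ∑ e : G.E, F e = 0 := by
    rw [← hφ v]
    exact Finset.sum_congr rfl fun e _ => (zsmul_eq_mul (φ e) (G.sign v e)).symm
  have hdv : G.dot (G.deltaV v) φ = 0 := by
    rw [MultiGraph.dot, ← hflow3]
    exact Finset.sum_congr rfl fun e _ => rfl
  have hzero : G.dot 0 φ = 0 := by simp [MultiGraph.dot]
  have hadd : ∀ x y : G.E → ZMod 3, G.dot (x + y) φ = G.dot x φ + G.dot y φ := by
    intro x y; simp [MultiGraph.dot, add_mul, Finset.sum_add_distrib]
  have hsmul : ∀ (a : ZMod 3) (x : G.E → ZMod 3), G.dot (a • x) φ = a * G.dot x φ := by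
    intro a x; simp [MultiGraph.dot, Finset.mul_sum, mul_assoc]
  have hpairdot : ∀ e₁ e₂ : G.E, e₁ ≠ e₂ →
      G.dot (G.deltaPair v e₁ e₂) φ = F e₁ - F e₂ := by
    intro e₁ e₂ hne
    rw [MultiGraph.dot]
    have hz : ∀ e ∈ (univ : Finset G.E), e ∉ ({e₁, e₂} : Finset G.E) →
        G.deltaPair v e₁ e₂ e * φ e = 0 := by
      intro e _ he
      simp only [Finset.mem_insert, Finset.mem_singleton, not_or] at he
      simp [MultiGraph.deltaPair, he.1, he.2]
    rw [← Finset.sum_subset (Finset.subset_univ ({e₁, e₂} : Finset G.E)) hz,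
      Finset.sum_pair hne]
    simp [MultiGraph.deltaPair, hne.symm, hF, sub_eq_add_neg, neg_mul]
  rcases hv with h3 | ⟨h3, hnz⟩
  · rw [MultiGraph.DeltaSub, if_neg h3] at hc
    refine Submodule.span_induction ?_ hzero
      (fun x y _ _ px py => by rw [hadd, px, py, add_zero])
      (fun a x _ px => by rw [hsmul, px, mul_zero]) hc
    intro x hx
    rw [Set.mem_singleton_iff] at hx
    rw [hx]; exact hdv
  · rw [MultiGraph.DeltaSub, if_pos h3] at hc
    have hsum3 : ∑ e : G.E, G.ind v e = 3 := by rw [G.sum_ind v, h3]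
    have fne : ∀ e : G.E, G.ind v e = 1 → F e ≠ 0 := by
      intro e h1
      have hφe : φ e ≠ 0 := hnz e (G.incident_of_ind_pos (by omega))
      simp only [hF]
      rcases G.sign_cases_of_ind_eq_one h1 with hs | hs <;> rw [hs] <;> simp [hφe]
    have fzero : ∀ e : G.E, G.ind v e ≠ 1 → F e = 0 := by
      intro e h1
      have h2 := G.ind_le_two v e
      simp only [hF]
      rcases Nat.lt_or_ge (G.ind v e) 1 with h | h
      · rw [G.sign_eq_zero_of_ind_eq_zero (by omega)]; simp
      · rw [G.sign_eq_zero_of_ind_eq_two (by omega)]; simp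
    have splitA : ∀ x y : G.E, x ≠ y →
        ∑ e ∈ univ \ {x, y}, G.ind v e + (G.ind v x + G.ind v y) = 3 := by
      intro x y hxy
      rw [← Finset.sum_pair hxy, Finset.sum_sdiff (Finset.subset_univ _), hsum3]
    have splitF : ∀ x y : G.E, x ≠ y →
        ∑ e ∈ univ \ {x, y}, F e + (F x + F y) = 0 := by
      intro x y hxy
      rw [← Finset.sum_pair hxy, Finset.sum_sdiff (Finset.subset_univ _), hflow3]
    have noloop : ∀ x y : G.E, x ≠ y → G.Incident v x → G.Incident v y →
        G.ind v x ≠ 2 := by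
      intro x y hxy hx hy h2
      have hpy := G.ind_pos_of_incident hy
      have hly := G.ind_le_two v y
      have hA := splitA x y hxy
      have hAy : G.ind v y = 1 := by omega
      have hrest : ∀ e ∈ univ \ ({x, y} : Finset G.E), F e = 0 := by
        intro e he
        apply fzero
        have h0 : ∑ e ∈ univ \ ({x, y} : Finset G.E), G.ind v e = 0 := by omega
        have := (Finset.sum_eq_zero_iff).1 h0 e he
        omega
      have hFx : F x = 0 := fzero x (by omega)
      have hS := splitF x y hxy
      rw [Finset.sum_eq_zero hrest, hFx] at hS
      exact fne y hAy (by simpa using hS)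
    have key : ∀ e₁ e₂ : G.E, e₁ ≠ e₂ → G.Incident v e₁ → G.Incident v e₂ →
        F e₁ = F e₂ := by
      intro e₁ e₂ hne h1 h2
      have hA := splitA e₁ e₂ hne
      have hl1 := noloop e₁ e₂ hne h1 h2
      have hl2 := noloop e₂ e₁ hne.symm h2 h1
      have hp1 := G.ind_pos_of_incident h1
      have hp2 := G.ind_pos_of_incident h2
      have hle1 := G.ind_le_two v e₁
      have hle2 := G.ind_le_two v e₂
      have ha1 : G.ind v e₁ = 1 := by omega
      have ha2 : G.ind v e₂ = 1 := by omega
      have hrest : ∑ e ∈ univ \ ({e₁, e₂} : Finset G.E), G.ind v e = 1 := by omega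
      obtain ⟨e₃, he₃, hne₃⟩ := Finset.exists_ne_zero_of_sum_ne_zero
        (hrest ▸ one_ne_zero)
      have ha3 : G.ind v e₃ = 1 := by
        have hle : G.ind v e₃ ≤ 1 :=
          hrest ▸ Finset.single_le_sum (f := G.ind v) (fun i _ => Nat.zero_le _) he₃
        omega
      have hFrest : ∑ e ∈ univ \ ({e₁, e₂} : Finset G.E), F e = F e₃ := by
        apply Finset.sum_eq_single_of_mem e₃ he₃
        intro b hb hbne
        apply fzero
        have hsd : ∑ e ∈ (univ \ ({e₁, e₂} : Finset G.E)) \ {e₃}, G.ind v e = 0 := by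
          have hss := Finset.sum_sdiff (f := G.ind v)
            (Finset.singleton_subset_iff.2 he₃)
          rw [Finset.sum_singleton] at hss
          omega
        have hb0 := (Finset.sum_eq_zero_iff).1 hsd b
          (Finset.mem_sdiff.2 ⟨hb, by simpa using hbne⟩)
        omega
      have hSF := splitF e₁ e₂ hne
      rw [hFrest] at hSF
      exact zmod3_aux _ _ _ (fne e₁ ha1) (fne e₂ ha2) (fne e₃ ha3) hSF
    refine Submodule.span_induction ?_ hzero
      (fun x y _ _ px py => by rw [hadd, px, py, add_zero])
      (fun a x _ px => by rw [hsmul, px, mul_zero]) hc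
    intro x hx
    rcases hx with hx | ⟨e₁, e₂, hne, h1, h2, rfl⟩
    · rw [Set.mem_singleton_iff] at hx
      rw [hx]; exact hdv
    · rw [hpairdot e₁ e₂ hne, key e₁ e₂ hne h1 h2, sub_self]
end

section
/- Let G be a ℤ/3-flow-critical graph, and for each vertex v let x_v ∈ Δ_v. If Σ_{v ∈ V(G)} x_v = 0 and x_u = 0 for some vertex u, then x_w = 0 for every vertex w. -/
open Finset

/-!
Flow-criticality gives, for every edge `e = ab`, a `ℤ/3`-flow `φ` with `φ e = 0` that is
nonzero on all other edges: lift a nowhere-zero flow of `G / e`; its value on `e` must be `0`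
since `G` has no nowhere-zero flow. Every vector of `Δ_v` with `v ∉ {a, b}` is orthogonal to
`φ`: `δ_v ⬝ φ = 0` is conservation at `v`, and at a vertex of degree `3` the three signed
values of `φ` are nonzero and sum to `0` in `ℤ/3`, hence are equal, so `δ_{v,e₁,e₂} ⬝ φ = 0`.
So if `x_a = 0`, pairing `∑ x_v = 0` with `φ` and evaluating it at `e` give `x_b ⬝ φ = 0` and
`x_b e = 0`, which force `x_b = 0`. Connectivity carries `x_u = 0` to every vertex.
-/

namespace MultiGraph

variable {G : MultiGraph}

section Incidence

variable {v : G.V} {e : G.E}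

instance decidableIncident (v : G.V) (e : G.E) : Decidable (G.Incident v e) :=
  inferInstanceAs (Decidable (_ ∨ _))

def incidentEdges (v : G.V) : Finset G.E := univ.filter (G.Incident v)

def Loopless : Prop := ∀ e : G.E, G.tail e ≠ G.head e

lemma mem_incidentEdges : e ∈ G.incidentEdges v ↔ G.Incident v e := by
  simp [incidentEdges]

lemma card_incidentEdges (hl : G.Loopless) (v : G.V) : #(G.incidentEdges v) = G.degree v := by
  rw [degree, ← card_union_of_disjoint]
  · congr 1
    ext f
    simp [incidentEdges, Incident]
  · exact disjoint_filter.mpr fun f _ ht hh => hl f (ht.trans hh.symm)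

lemma sign_eq_zero (h : ¬ G.Incident v e) : G.sign v e = 0 := by
  simp only [Incident, not_or] at h
  simp [sign, h.1, h.2]

lemma sign_mul_self (hl : G.tail e ≠ G.head e) (h : G.Incident v e) :
    G.sign v e * G.sign v e = 1 := by
  rcases h with rfl | rfl
  · simp [sign, hl.symm]
  · simp [sign, hl]

lemma deltaV_eq_zero (h : ¬ G.Incident v e) : G.deltaV v e = 0 := by
  simp [deltaV, sign_eq_zero h]

lemma deltaV_mul_self (hl : G.tail e ≠ G.head e) (h : G.Incident v e) :
    G.deltaV v e * G.deltaV v e = 1 := by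
  simp only [deltaV, ← Int.cast_mul, sign_mul_self hl h, Int.cast_one]

lemma deltaV_ne_zero (hl : G.tail e ≠ G.head e) (h : G.Incident v e) : G.deltaV v e ≠ 0 :=
  left_ne_zero_of_mul_eq_one (deltaV_mul_self hl h)

lemma deltaV_dotProduct_self (hl : G.Loopless) (v : G.V) :
    G.deltaV v ⬝ᵥ G.deltaV v = G.degree v := by
  have h : ∀ f, G.deltaV v f * G.deltaV v f = if G.Incident v f then 1 else 0 := fun f => by
    split_ifs with hf
    exacts [deltaV_mul_self (hl f) hf, by simp [deltaV_eq_zero hf]]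
  simp only [dotProduct, h, sum_boole, ← card_incidentEdges hl]
  rfl

lemma exists_incidentEdges_eq_of_degree_eq_three (hl : G.Loopless) (h3 : G.degree v = 3)
    (he : G.Incident v e) : ∃ f g, e ≠ f ∧ e ≠ g ∧ f ≠ g ∧ G.incidentEdges v = {e, f, g} := by
  have he' : e ∈ G.incidentEdges v := mem_incidentEdges.mpr he
  have hcard : #((G.incidentEdges v).erase e) = 2 := by
    rw [card_erase_of_mem he', card_incidentEdges hl, h3]
  obtain ⟨f, g, hfg, hI⟩ := card_eq_two.mp hcard
  have hf : f ∈ (G.incidentEdges v).erase e := by simp [hI]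
  have hg : g ∈ (G.incidentEdges v).erase e := by simp [hI]
  refine ⟨f, g, (ne_of_mem_erase hf).symm, (ne_of_mem_erase hg).symm, hfg, ?_⟩
  rw [← insert_erase he', hI]

lemma dotProduct_eq_of_incidentEdges_eq {c : G.E → ZMod 3}
    (hc : ∀ f, ¬ G.Incident v f → c f = 0) {f g : G.E} (hef : e ≠ f) (heg : e ≠ g)
    (hfg : f ≠ g) (hI : G.incidentEdges v = {e, f, g}) (ψ : G.E → ZMod 3) :
    c ⬝ᵥ ψ = c e * ψ e + c f * ψ f + c g * ψ g := by
  rw [dotProduct, ← sum_subset (subset_univ (G.incidentEdges v)), hI,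
    sum_insert (by simp [hef, heg]), sum_pair hfg, add_assoc]
  intro h _ hh
  rw [hc h (mt mem_incidentEdges.mpr hh), zero_mul]

end Incidence

section Flows

variable {A : Type*} [AddCommGroup A]

lemma sum_sum_sign_smul (φ : G.E → A) : ∑ v, ∑ e, G.sign v e • φ e = 0 := by
  rw [sum_comm]
  refine sum_eq_zero fun e _ => ?_
  simp [sign, sub_smul, ite_smul]

lemma isFlow_of_forall_ne {φ : G.E → A} (w : G.V)
    (h : ∀ v, v ≠ w → ∑ e, G.sign v e • φ e = 0) : G.IsFlow φ := by
  intro v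
  obtain rfl | hv := eq_or_ne v w
  · rw [← sum_sum_sign_smul φ, Fintype.sum_eq_single v h]
  · exact h v hv

end Flows

section Contraction

variable {A : Type*} {e : G.E}

def contractMk (S : Set G.E) (v : G.V) : (G.contract S).V := Quot.mk _ v

lemma contract_tail (S : Set G.E) (f : (G.contract S).E) :
    (G.contract S).tail f = G.contractMk S (G.tail f.1) := rfl

lemma contract_head (S : Set G.E) (f : (G.contract S).E) :
    (G.contract S).head f = G.contractMk S (G.head f.1) := rfl

lemma contractMk_eq_iff {v : G.V} (hv : G.Incident v e → G.tail e = G.head e) (w : G.V) :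
    G.contractMk {e} w = G.contractMk {e} v ↔ w = v := by
  refine ⟨fun h => ?_, congrArg _⟩
  let p : G.V → G.V := fun u => if u = G.head e then G.tail e else u
  have hp : ∀ a b, (∃ e' ∈ ({e} : Set G.E), G.tail e' = a ∧ G.head e' = b) → p a = p b := by
    rintro a b ⟨e', rfl, rfl, rfl⟩
    simp [p]
  have hpwv : p w = p v := congrArg (Quot.lift p hp) h
  by_cases hw : w = G.head e <;> by_cases hv' : v = G.head e <;>
    simp only [p, hw, hv', if_true, if_false] at hpwv
  · rw [hw, hv']
  · exact absurd (hv (Or.inl hpwv)) (hpwv ▸ hv')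
  · rw [hpwv, hv (Or.inr hv'.symm), hv']
  · exact hpwv

lemma contract_sign {v : G.V} (hv : G.Incident v e → G.tail e = G.head e)
    (f : (G.contract {e}).E) : (G.contract {e}).sign (G.contractMk {e} v) f = G.sign v f.1 := by
  simp only [sign, contract_head, contract_tail, contractMk_eq_iff hv]

def liftContract (e : G.E) (ψ : (G.contract {e}).E → A) (c : A) : G.E → A :=
  fun f => if h : f = e then c else ψ ⟨f, h⟩

lemma liftContract_of_ne (ψ : (G.contract {e}).E → A) (c : A) {f : G.E} (hf : f ≠ e) :
    G.liftContract e ψ c f = ψ ⟨f, hf⟩ :=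
  dif_neg hf

variable [AddCommGroup A]

lemma sum_sign_smul_liftContract (e : G.E) (ψ : (G.contract {e}).E → A) (c : A) (v : G.V) :
    ∑ f, G.sign v f • G.liftContract e ψ c f =
      G.sign v e • c + ∑ f : (G.contract {e}).E, G.sign v f.1 • ψ f := by
  rw [← add_sum_erase _ _ (mem_univ e)]
  congr 1
  · simp [liftContract]
  · refine (sum_subtype (F := (G.contract {e}).fE) _ (fun f => by simp) _).trans ?_
    refine sum_congr rfl fun f _ => ?_
    rw [liftContract, dif_neg (show (f : G.E) ≠ e from f.2)]

lemma sum_sign_smul_liftContract_eq_zero {ψ : (G.contract {e}).E → A}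
    (hψ : (G.contract {e}).IsFlow ψ) (c : A) {v : G.V}
    (hv : G.Incident v e → G.tail e = G.head e) :
    ∑ f, G.sign v f • G.liftContract e ψ c f = 0 := by
  have hve : G.sign v e = 0 := by
    by_cases h : G.Incident v e
    · simp [sign, hv h]
    · exact sign_eq_zero h
  rw [sum_sign_smul_liftContract, hve, zero_smul, zero_add, ← hψ (G.contractMk {e} v)]
  simp only [contract_sign hv]

lemma hasNZFlow_of_contract_loop [Nontrivial A] (hloop : G.tail e = G.head e)
    (h : (G.contract {e}).HasNZFlow A) : G.HasNZFlow A := by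
  obtain ⟨ψ, hψ, hψ0⟩ := h
  obtain ⟨c, hc⟩ := exists_ne (0 : A)
  refine ⟨G.liftContract e ψ c, fun v => sum_sign_smul_liftContract_eq_zero hψ c fun _ => hloop,
    fun f => ?_⟩
  obtain rfl | hf := eq_or_ne f e
  · simpa [liftContract] using hc
  · rw [liftContract_of_ne ψ c hf]
    exact hψ0 _

/-- The value on `e` balances the flow at `tail e`; conservation at `head e` then comes for free
from `isFlow_of_forall_ne`. -/
lemma exists_isFlow_of_contract (hne : G.tail e ≠ G.head e)
    (h : (G.contract {e}).HasNZFlow A) : ∃ φ : G.E → A, G.IsFlow φ ∧ ∀ f, f ≠ e → φ f ≠ 0 := by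
  obtain ⟨ψ, hψ, hψ0⟩ := h
  let c := ∑ f : (G.contract {e}).E, G.sign (G.tail e) f.1 • ψ f
  refine ⟨G.liftContract e ψ c, isFlow_of_forall_ne (G.head e) fun v hvh => ?_,
    fun f hf => liftContract_of_ne ψ c hf ▸ hψ0 _⟩
  obtain rfl | hvt := eq_or_ne v (G.tail e)
  · rw [sum_sign_smul_liftContract]
    simp [sign, hne.symm, c]
  · refine sum_sign_smul_liftContract_eq_zero hψ c fun hv => ?_
    exact (hv.elim (fun h => hvt h.symm) (fun h => hvh h.symm)).elim

namespace FlowCritical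

variable [Nontrivial A]

theorem loopless (hG : G.FlowCritical A) : G.Loopless :=
  fun e hloop => hG.2.1 (hasNZFlow_of_contract_loop hloop (hG.2.2 e))

theorem exists_isFlow_eq_zero (hG : G.FlowCritical A) (e : G.E) :
    ∃ φ : G.E → A, G.IsFlow φ ∧ φ e = 0 ∧ ∀ f, f ≠ e → φ f ≠ 0 := by
  obtain ⟨φ, hφ, hφ0⟩ := exists_isFlow_of_contract (hG.loopless e) (hG.2.2 e)
  refine ⟨φ, hφ, by_contra fun hφe => hG.2.1 ⟨φ, hφ, fun f => ?_⟩, hφ0⟩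
  obtain rfl | hf := eq_or_ne f e
  exacts [hφe, hφ0 f hf]

end FlowCritical

end Contraction

section DeltaSub

variable {v : G.V}

lemma isFlow_iff_deltaV_dotProduct {φ : G.E → ZMod 3} :
    G.IsFlow φ ↔ ∀ v, G.deltaV v ⬝ᵥ φ = 0 := by
  simp [IsFlow, dotProduct, deltaV, zsmul_eq_mul]

lemma eq_of_add_add_eq_zero {a b c : ZMod 3} (ha : a ≠ 0) (hb : b ≠ 0) (hc : c ≠ 0)
    (h : a + b + c = 0) : b = a ∧ c = a := by
  revert a b c; decide

lemma deltaV_mul_eq_of_degree_eq_three (hl : G.Loopless) (h3 : G.degree v = 3)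
    {φ : G.E → ZMod 3} (hφ : G.IsFlow φ) (hφv : ∀ f, G.Incident v f → φ f ≠ 0)
    {e₁ e₂ : G.E} (h₁ : G.Incident v e₁) (h₂ : G.Incident v e₂) :
    G.deltaV v e₁ * φ e₁ = G.deltaV v e₂ * φ e₂ := by
  obtain ⟨f, g, hef, heg, hfg, hI⟩ := exists_incidentEdges_eq_of_degree_eq_three hl h3 h₁
  have hsum := isFlow_iff_deltaV_dotProduct.mp hφ v
  rw [dotProduct_eq_of_incidentEdges_eq (fun _ => deltaV_eq_zero) hef heg hfg hI] at hsum
  have hne : ∀ h, G.Incident v h → G.deltaV v h * φ h ≠ 0 := fun h hh =>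
    mul_ne_zero (deltaV_ne_zero (hl h) hh) (hφv h hh)
  have hf : G.Incident v f := mem_incidentEdges.mp (by simp [hI])
  have hg : G.Incident v g := mem_incidentEdges.mp (by simp [hI])
  obtain ⟨hfe, hge⟩ := eq_of_add_add_eq_zero (hne _ h₁) (hne _ hf) (hne _ hg) hsum
  have he₂ : e₂ ∈ ({e₁, f, g} : Finset G.E) := hI ▸ mem_incidentEdges.mpr h₂
  simp only [mem_insert, mem_singleton] at he₂
  rcases he₂ with rfl | rfl | rfl
  exacts [rfl, hfe.symm, hge.symm]

lemma deltaPair_eq {e₁ e₂ : G.E} (h : e₁ ≠ e₂) :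
    G.deltaPair v e₁ e₂ = Pi.single e₁ (G.deltaV v e₁) - Pi.single e₂ (G.deltaV v e₂) := by
  ext f
  by_cases h₁ : f = e₁
  · subst h₁; simp [deltaPair, deltaV, h]
  · by_cases h₂ : f = e₂
    · subst h₂; simp [deltaPair, deltaV, h₁]
    · simp [deltaPair, h₁, h₂]

lemma deltaPair_dotProduct {e₁ e₂ : G.E} (h : e₁ ≠ e₂) (φ : G.E → ZMod 3) :
    G.deltaPair v e₁ e₂ ⬝ᵥ φ = G.deltaV v e₁ * φ e₁ - G.deltaV v e₂ * φ e₂ := by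
  rw [deltaPair_eq h, sub_dotProduct, single_dotProduct, single_dotProduct]

lemma map_eq_zero_of_mem_deltaSub (ℓ : (G.E → ZMod 3) →ₗ[ZMod 3] ZMod 3)
    (hδ : ℓ (G.deltaV v) = 0)
    (hpair : G.degree v = 3 → ∀ e₁ e₂, e₁ ≠ e₂ → G.Incident v e₁ → G.Incident v e₂ →
      ℓ (G.deltaPair v e₁ e₂) = 0)
    {y : G.E → ZMod 3} (hy : y ∈ G.DeltaSub v) : ℓ y = 0 := by
  suffices G.DeltaSub v ≤ LinearMap.ker ℓ from this hy
  unfold DeltaSub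
  split_ifs with h3
  · refine Submodule.span_le.mpr ?_
    rintro _ (rfl | ⟨e₁, e₂, hne, h₁, h₂, rfl⟩)
    exacts [hδ, hpair h3 e₁ e₂ hne h₁ h₂]
  · simpa using hδ

lemma apply_eq_zero_of_mem_deltaSub {y : G.E → ZMod 3} (hy : y ∈ G.DeltaSub v) {f : G.E}
    (hf : ¬ G.Incident v f) : y f = 0 := by
  refine map_eq_zero_of_mem_deltaSub (LinearMap.proj f) (deltaV_eq_zero hf) ?_ hy
  intro _ e₁ e₂ hne h₁ h₂
  have h₁f : f ≠ e₁ := by rintro rfl; exact hf h₁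
  have h₂f : f ≠ e₂ := by rintro rfl; exact hf h₂
  simp [deltaPair_eq hne, h₁f, h₂f]

lemma dotProduct_eq_zero_of_mem_deltaSub (hl : G.Loopless) {φ : G.E → ZMod 3}
    (hφ : G.IsFlow φ) (hφv : G.degree v = 3 → ∀ f, G.Incident v f → φ f ≠ 0)
    {y : G.E → ZMod 3} (hy : y ∈ G.DeltaSub v) : y ⬝ᵥ φ = 0 := by
  refine map_eq_zero_of_mem_deltaSub ((dotProductBilin (ZMod 3) (ZMod 3)).flip φ) ?_ ?_ hy
  · simpa using isFlow_iff_deltaV_dotProduct.mp hφ v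
  · intro h3 e₁ e₂ hne h₁ h₂
    simp [deltaPair_dotProduct hne, deltaV_mul_eq_of_degree_eq_three hl h3 hφ (hφv h3) h₁ h₂]

lemma deltaV_dotProduct_eq_zero_of_mem_deltaSub (hl : G.Loopless) (h3 : G.degree v = 3)
    {y : G.E → ZMod 3} (hy : y ∈ G.DeltaSub v) : G.deltaV v ⬝ᵥ y = 0 := by
  rw [dotProduct_comm]
  refine map_eq_zero_of_mem_deltaSub ((dotProductBilin (ZMod 3) (ZMod 3)).flip (G.deltaV v))
    ?_ ?_ hy
  · simp only [LinearMap.flip_apply, dotProductBilin_apply_apply, deltaV_dotProduct_self hl, h3]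
    rfl
  · intro _ e₁ e₂ hne h₁ h₂
    simp [deltaPair_dotProduct hne, deltaV_mul_self (hl e₁) h₁, deltaV_mul_self (hl e₂) h₂]

/-- Both `(s y, t z)` and `(s p, t q)` are multiples of `(1, -1)`, the second a nonzero one,
and `y p + z q = 2 (s y) (s p)`. -/
lemma eq_zero_of_mul_add_mul_eq_zero {s t y z p q : ZMod 3} (hs : s * s = 1) (ht : t * t = 1)
    (hp : p ≠ 0) (hq : q ≠ 0) (hyz : s * y + t * z = 0) (hpq : s * p + t * q = 0)
    (hdot : y * p + z * q = 0) : y = 0 ∧ z = 0 := by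
  revert s t y z p q; decide

lemma eq_zero_of_mem_deltaSub (hl : G.Loopless) {y : G.E → ZMod 3} (hy : y ∈ G.DeltaSub v)
    {e : G.E} (he : G.Incident v e) (hye : y e = 0) {φ : G.E → ZMod 3} (hφ : G.IsFlow φ)
    (hφe : φ e = 0) (hφv : ∀ f, f ≠ e → G.Incident v f → φ f ≠ 0) (hdot : y ⬝ᵥ φ = 0) :
    y = 0 := by
  by_cases h3 : G.degree v = 3
  · obtain ⟨f, g, hef, heg, hfg, hI⟩ := exists_incidentEdges_eq_of_degree_eq_three hl h3 he
    have hf : G.Incident v f := mem_incidentEdges.mp (by simp [hI])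
    have hg : G.Incident v g := mem_incidentEdges.mp (by simp [hI])
    have hδy := deltaV_dotProduct_eq_zero_of_mem_deltaSub hl h3 hy
    have hδφ := isFlow_iff_deltaV_dotProduct.mp hφ v
    rw [dotProduct_eq_of_incidentEdges_eq (fun _ => deltaV_eq_zero) hef heg hfg hI] at hδy hδφ
    rw [dotProduct_eq_of_incidentEdges_eq (fun _ => apply_eq_zero_of_mem_deltaSub hy)
      hef heg hfg hI] at hdot
    simp only [hye, hφe, mul_zero, zero_add] at hδy hδφ hdot
    obtain ⟨hyf, hyg⟩ := eq_zero_of_mul_add_mul_eq_zero (deltaV_mul_self (hl f) hf)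
      (deltaV_mul_self (hl g) hg) (hφv f hef.symm hf) (hφv g heg.symm hg) hδy hδφ hdot
    ext h
    by_cases hh : G.Incident v h
    · have : h ∈ ({e, f, g} : Finset G.E) := hI ▸ mem_incidentEdges.mpr hh
      simp only [mem_insert, mem_singleton] at this
      rcases this with rfl | rfl | rfl <;> assumption
    · exact apply_eq_zero_of_mem_deltaSub hy hh
  · rw [DeltaSub, if_neg h3] at hy
    obtain ⟨c, rfl⟩ := Submodule.mem_span_singleton.mp hy
    have hc : c * G.deltaV v e = 0 := hye
    rw [(mul_eq_zero_iff_right (deltaV_ne_zero (hl e) he)).mp hc, zero_smul]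

end DeltaSub

theorem FlowCritical.eq_zero_of_adj (hG : G.FlowCritical (ZMod 3))
    {x : G.V → G.E → ZMod 3} (hx : ∀ v, x v ∈ G.DeltaSub v) (hsum : ∑ v, x v = 0)
    {a b : G.V} (hab : G.Adj a b) (ha : x a = 0) : x b = 0 := by
  obtain rfl | hne := eq_or_ne a b
  · exact ha
  obtain ⟨e, he⟩ := hab
  have hbe : G.Incident b e := he.elim (fun h => Or.inr h.2) (fun h => Or.inl h.1)
  have hends : ∀ v, v ≠ a → v ≠ b → ¬ G.Incident v e := by
    rintro v hva hvb (h | h) <;> rcases he with ⟨h₁, h₂⟩ | ⟨h₁, h₂⟩ <;> simp_all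
  have hvanish : ∀ F : G.V → ZMod 3, ∑ v, F v = 0 → F a = 0 →
      (∀ v, v ≠ a → v ≠ b → F v = 0) → F b = 0 := by
    intro F hF hFa hF0
    rwa [Fintype.sum_eq_single b fun v hvb => ?_] at hF
    obtain rfl | hva := eq_or_ne v a
    exacts [hFa, hF0 v hva hvb]
  have hl := hG.loopless
  obtain ⟨φ, hφ, hφe, hφ0⟩ := hG.exists_isFlow_eq_zero e
  refine eq_zero_of_mem_deltaSub hl (hx b) hbe ?_ hφ hφe (fun f hf _ => hφ0 f hf) ?_
  · refine hvanish (fun v => x v e) ?_ (by simp [ha]) fun v hva hvb =>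
      apply_eq_zero_of_mem_deltaSub (hx v) (hends v hva hvb)
    simpa using congrFun hsum e
  · refine hvanish (fun v => x v ⬝ᵥ φ) ?_ (by simp [ha]) fun v hva hvb =>
      dotProduct_eq_zero_of_mem_deltaSub hl hφ
        (fun _ f hf => hφ0 f (by rintro rfl; exact hends v hva hvb hf)) (hx v)
    rw [← sum_dotProduct, hsum, zero_dotProduct]

end MultiGraph

open MultiGraph in
/-- If `G` is `ℤ/3`-flow-critical, `x_v ∈ Δ_v` for every vertex `v`,
`∑_v x_v = 0` and `x_u = 0` for some vertex `u`, then `x_w = 0` for every `w`. -/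
theorem all_zero_of_sum_zero (G : MultiGraph) (hG : G.FlowCritical (ZMod 3))
    (x : G.V → (G.E → ZMod 3)) (hx : ∀ v : G.V, x v ∈ G.DeltaSub v)
    (hsum : ∑ v : G.V, x v = 0) (u : G.V) (hu : x u = 0) :
    ∀ w : G.V, x w = 0 := by
  intro w
  induction hG.1.2 u w with
  | refl => exact hu
  | tail _ hadj ih => exact hG.eq_zero_of_adj hx hsum hadj ih
end

section
/- If G is a ℤ/3-flow-critical graph and u, w are adjacent vertices joined by an edge e, and x_v ∈ Δ_v for all v with Σ_v x_v = 0, x_u = 0, and x_w ≠ 0, then deg(w) = 3 and x_w = δ_{w,e₁,e₂}, where e₁, e₂ are the two edges other than e incident with w. -/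
open Finset

namespace MultiGraph
variable (G : MultiGraph)

lemma sign_trichotomy (v : G.V) (f : G.E) :
    G.sign v f = 1 ∨ G.sign v f = 0 ∨ G.sign v f = -1 := by
  unfold sign; split_ifs <;> simp

lemma sign_eq_zero_of_not_incident {v : G.V} {f : G.E} (h : ¬ G.Incident v f) :
    G.sign v f = 0 := by
  unfold Incident at h; push_neg at h
  unfold sign; rw [if_neg h.2, if_neg h.1]; ring

lemma incident_of_sign_ne_zero {v : G.V} {f : G.E} (h : G.sign v f ≠ 0) :
    G.Incident v f := by
  by_contra hc; exact h (G.sign_eq_zero_of_not_incident hc)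

lemma deltaSub_apply_eq_zero {v : G.V} {f : G.E} (hf : G.sign v f = 0)
    {y : G.E → ZMod 3} (hy : y ∈ G.DeltaSub v) : y f = 0 := by
  unfold DeltaSub at hy
  have key : ∀ (S : Set (G.E → ZMod 3)),
      (∀ z ∈ S, z f = 0) → y ∈ Submodule.span (ZMod 3) S → y f = 0 := by
    intro S hS hyS
    refine Submodule.span_induction (p := fun z _ => z f = 0) hS rfl
      (fun a b _ _ ha hb => by simp [Pi.add_apply, ha, hb])
      (fun c a _ ha => by simp [Pi.smul_apply, ha]) hyS
  split_ifs at hy with hdeg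
  · refine key _ ?_ hy
    rintro z (rfl | ⟨e₁, e₂, hne, h1, h2, rfl⟩)
    · simp [deltaV, hf]
    · unfold deltaPair
      split_ifs with h h'
      · subst h; simp [hf]
      · subst h'; simp [hf]
      · rfl
  · refine key _ ?_ hy
    rintro z rfl
    simp [deltaV, hf]

lemma degree_eq_sum (v : G.V) :
    G.degree v = ∑ f : G.E,
      ((if G.tail f = v then 1 else 0) + (if G.head f = v then 1 else 0)) := by
  unfold degree
  rw [Finset.sum_add_distrib, Finset.card_filter, Finset.card_filter]

end MultiGraph
open MultiGraph in
/-- If `G` is `ℤ/3`-flow-critical, `u` and `w` are adjacent vertices joined by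
an edge `e`, `x_v ∈ Δ_v` for all `v`, `∑_v x_v = 0`, `x_u = 0` and `x_w ≠ 0`,
then `deg w = 3` and `x_w = δ_{w,e₁,e₂}` for the two edges `e₁, e₂ ≠ e`
incident with `w`. -/
theorem xw_eq_deltaPair (G : MultiGraph) (hG : G.FlowCritical (ZMod 3))
    (u w : G.V) (huw : u ≠ w) (e : G.E)
    (he : (G.tail e = u ∧ G.head e = w) ∨ (G.tail e = w ∧ G.head e = u))
    (x : G.V → (G.E → ZMod 3)) (hx : ∀ v : G.V, x v ∈ G.DeltaSub v)
    (hsum : ∑ v : G.V, x v = 0) (hu : x u = 0) (hw : x w ≠ 0) :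
    G.degree w = 3 ∧
    ∃ e₁ e₂ : G.E, e₁ ≠ e₂ ∧ e₁ ≠ e ∧ e₂ ≠ e ∧
      G.Incident w e₁ ∧ G.Incident w e₂ ∧ x w = G.deltaPair w e₁ e₂ := by
  classical
  have hse : G.sign w e = 1 ∨ G.sign w e = -1 := by
    rcases he with ⟨h1, h2⟩ | ⟨h1, h2⟩
    · left; unfold MultiGraph.sign
      rw [h1, h2, if_pos rfl, if_neg huw]; ring
    · right; unfold MultiGraph.sign
      rw [h1, h2, if_pos rfl, if_neg huw]; ring
  have hsupp : ∀ f, G.sign w f = 0 → x w f = 0 :=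
    fun f hf => G.deltaSub_apply_eq_zero hf (hx w)
  -- x w e = 0
  have hxe0 : x w e = 0 := by
    have h0 : ∑ v : G.V, x v e = 0 := by
      have := congrFun hsum e
      simpa using this
    have hsub : ∑ v ∈ ({u, w} : Finset G.V), x v e = ∑ v : G.V, x v e := by
      refine Finset.sum_subset (Finset.subset_univ _) ?_
      intro v _ hv
      simp only [Finset.mem_insert, Finset.mem_singleton] at hv
      push_neg at hv
      refine G.deltaSub_apply_eq_zero ?_ (hx v)
      unfold MultiGraph.sign
      rcases he with ⟨h1, h2⟩ | ⟨h1, h2⟩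
      · rw [h1, h2, if_neg (Ne.symm hv.2), if_neg (Ne.symm hv.1)]; ring
      · rw [h1, h2, if_neg (Ne.symm hv.1), if_neg (Ne.symm hv.2)]; ring
    rw [h0] at hsub
    rw [Finset.sum_pair huw, hu] at hsub
    simpa using hsub
  -- degree w = 3
  have hdeg : G.degree w = 3 := by
    by_contra hd
    have hx' := hx w
    rw [MultiGraph.DeltaSub, if_neg hd, Submodule.mem_span_singleton] at hx'
    obtain ⟨c, hc⟩ := hx'
    have hce : c * ((G.sign w e : ℤ) : ZMod 3) = 0 := by
      have h1 := congrFun hc e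
      rw [hxe0] at h1
      simpa [MultiGraph.deltaV] using h1
    have hc0 : c = 0 := by
      rcases hse with h | h <;> rw [h] at hce <;> simpa using hce
    exact hw (by rw [← hc, hc0, zero_smul])
  refine ⟨hdeg, ?_⟩
  set inc : G.E → ℕ :=
    fun f => (if G.tail f = w then 1 else 0) + (if G.head f = w then 1 else 0)
    with hinc_def
  have hdeg' : ∑ f : G.E, inc f = 3 := by
    rw [← G.degree_eq_sum w]; exact hdeg
  have hince : inc e = 1 := by
    rcases he with ⟨h1, h2⟩ | ⟨h1, h2⟩ <;>
      simp [hinc_def, h1, h2, huw, Ne.symm huw]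
  by_cases hloop : ∃ l, G.tail l = w ∧ G.head l = w
  · -- a loop at w: contradiction
    exfalso
    obtain ⟨l, hl1, hl2⟩ := hloop
    have hle : l ≠ e := by
      intro h; subst h
      rcases he with ⟨h1, h2⟩ | ⟨h1, h2⟩
      · exact huw (h1.symm.trans hl1)
      · exact huw (h2.symm.trans hl2)
    have hinc_l : inc l = 2 := by simp [hinc_def, hl1, hl2]
    have hzero : ∀ f, f ≠ l → f ≠ e → inc f = 0 := by
      intro f hfl hfe
      by_contra hne
      have h3 : ∑ g ∈ ({l, e, f} : Finset G.E), inc g ≤ ∑ g : G.E, inc g :=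
        Finset.sum_le_sum_of_subset (Finset.subset_univ _)
      rw [Finset.sum_insert (by simp [hle, Ne.symm hfl]),
        Finset.sum_pair (Ne.symm hfe), hdeg'] at h3
      omega
    apply hw; funext f
    by_cases hfe : f = e
    · subst hfe; exact hxe0
    by_cases hfl : f = l
    · subst hfl
      apply hsupp
      unfold MultiGraph.sign
      rw [hl1, hl2, if_pos rfl]; ring
    · have h0 := hzero f hfl hfe
      apply hsupp
      have ht : G.tail f ≠ w := by intro h; simp [hinc_def, h] at h0
      have hh : G.head f ≠ w := by intro h; simp [hinc_def, h] at h0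
      unfold MultiGraph.sign
      rw [if_neg hh, if_neg ht]; ring
  · -- no loop at w
    push_neg at hloop
    have hsignB : ∀ f, G.Incident w f ↔ G.sign w f ≠ 0 := by
      intro f
      constructor
      · rintro (h | h)
        · have h2 := hloop f h
          unfold MultiGraph.sign; rw [if_neg h2, if_pos h]; simp
        · by_cases ht : G.tail f = w
          · exact absurd h (hloop f ht)
          · unfold MultiGraph.sign; rw [if_pos h, if_neg ht]; simp
      · exact fun h => G.incident_of_sign_ne_zero h
    have hincB : ∀ f, inc f = if G.Incident w f then 1 else 0 := by
      intro f
      by_cases ht : G.tail f = w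
      · have hh := hloop f ht
        simp [hinc_def, ht, hh, MultiGraph.Incident]
      · by_cases hh : G.head f = w
        · simp [hinc_def, ht, hh, MultiGraph.Incident]
        · simp [hinc_def, ht, hh, MultiGraph.Incident]
    set B : Finset G.E := Finset.univ.filter (fun f => G.Incident w f) with hB_def
    have hcardB : B.card = 3 := by
      have h1 : ∑ f : G.E, inc f = B.card := by
        rw [hB_def, Finset.card_filter]
        exact Finset.sum_congr rfl (fun f _ => hincB f)
      omega
    have heB : e ∈ B := by
      rw [hB_def, Finset.mem_filter]
      refine ⟨Finset.mem_univ _, ?_⟩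
      rcases he with ⟨h1, h2⟩ | ⟨h1, h2⟩
      · exact Or.inr h2
      · exact Or.inl h1
    have h2 : (B.erase e).card = 2 := by
      rw [Finset.card_erase_of_mem heB, hcardB]
    obtain ⟨e₁, e₂, hne, hB2⟩ := Finset.card_eq_two.mp h2
    have he₁ : e₁ ∈ B.erase e := by rw [hB2]; simp
    have he₂ : e₂ ∈ B.erase e := by rw [hB2]; simp
    have he₁e : e₁ ≠ e := (Finset.mem_erase.mp he₁).1
    have he₂e : e₂ ≠ e := (Finset.mem_erase.mp he₂).1
    have hi₁ : G.Incident w e₁ :=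
      (Finset.mem_filter.mp (Finset.mem_erase.mp he₁).2).2
    have hi₂ : G.Incident w e₂ :=
      (Finset.mem_filter.mp (Finset.mem_erase.mp he₂).2).2
    have hxsupp : ∀ f, f ∉ ({e, e₁, e₂} : Finset G.E) → x w f = 0 := by
      intro f hf
      simp only [Finset.mem_insert, Finset.mem_singleton] at hf
      push_neg at hf
      apply hsupp
      by_contra hne'
      have hfB : f ∈ B.erase e := by
        rw [Finset.mem_erase, hB_def, Finset.mem_filter]
        exact ⟨hf.1, Finset.mem_univ _, G.incident_of_sign_ne_zero hne'⟩
      rw [hB2] at hfB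
      simp only [Finset.mem_insert, Finset.mem_singleton] at hfB
      rcases hfB with h | h
      · exact hf.2.1 h
      · exact hf.2.2 h
    set s : G.E → ZMod 3 := fun f => ((G.sign w f : ℤ) : ZMod 3) with hs_def
    have hs_sq : ∀ f, G.Incident w f → s f * s f = 1 := by
      intro f hf
      have h1 := (hsignB f).mp hf
      rcases G.sign_trichotomy w f with h | h | h
      · simp [hs_def, h]
      · exact absurd h h1
      · simp [hs_def, h]
    -- the linear constraint
    have hL : ∑ f : G.E, s f * x w f = 0 := by
      have hx' := hx w
      rw [MultiGraph.DeltaSub, if_pos hdeg] at hx'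
      refine Submodule.span_induction (p := fun z _ => ∑ f : G.E, s f * z f = 0)
        ?_ (by simp) ?_ ?_ hx'
      · rintro z (rfl | ⟨f₁, f₂, hne', hif₁, hif₂, rfl⟩)
        · have hterm : ∀ f, s f * (G.deltaV w f) =
              if G.Incident w f then 1 else 0 := by
            intro f
            by_cases hi : G.Incident w f
            · rw [if_pos hi]
              have := hs_sq f hi
              simpa [MultiGraph.deltaV, hs_def] using this
            · rw [if_neg hi]
              have h0 := G.sign_eq_zero_of_not_incident hi
              simp [MultiGraph.deltaV, h0]
          rw [Finset.sum_congr rfl (fun f _ => hterm f), Finset.sum_boole]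
          have : (Finset.univ.filter fun f => G.Incident w f).card = 3 := hcardB
          rw [this]; decide
        · have hz : ∀ f ∈ Finset.univ, f ∉ ({f₁, f₂} : Finset G.E) →
              s f * G.deltaPair w f₁ f₂ f = 0 := by
            intro f _ hf
            simp only [Finset.mem_insert, Finset.mem_singleton] at hf
            push_neg at hf
            unfold MultiGraph.deltaPair
            rw [if_neg hf.1, if_neg hf.2, mul_zero]
          rw [← Finset.sum_subset (Finset.subset_univ _) hz, Finset.sum_pair hne']
          unfold MultiGraph.deltaPair
          rw [if_pos rfl, if_neg (Ne.symm hne'), if_pos rfl]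
          show s f₁ * s f₁ + s f₂ * -(s f₂) = 0
          rw [mul_neg, hs_sq f₁ hif₁, hs_sq f₂ hif₂]; ring
      · intro a b _ _ ha hb
        have : ∀ f, s f * (a + b) f = s f * a f + s f * b f := by
          intro f; simp [mul_add]
        rw [Finset.sum_congr rfl (fun f _ => this f), Finset.sum_add_distrib,
          ha, hb, add_zero]
      · intro c a _ ha
        have : ∀ f, s f * (c • a) f = c * (s f * a f) := by
          intro f; simp [smul_eq_mul]; ring
        rw [Finset.sum_congr rfl (fun f _ => this f), ← Finset.mul_sum, ha,
          mul_zero]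
    -- reduce to two terms
    have hL3 : s e₁ * x w e₁ + s e₂ * x w e₂ = 0 := by
      have hsub : ∑ f ∈ ({e, e₁, e₂} : Finset G.E), s f * x w f
          = ∑ f : G.E, s f * x w f := by
        refine Finset.sum_subset (Finset.subset_univ _) ?_
        intro f _ hf
        rw [hxsupp f hf, mul_zero]
      rw [hL, Finset.sum_insert (by simp [Ne.symm he₁e, Ne.symm he₂e]),
        Finset.sum_pair hne, hxe0, mul_zero, zero_add] at hsub
      exact hsub
    have hval : ∀ a : ZMod 3, a ≠ 0 → a = 1 ∨ a = -1 := by decide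
    have hs_ne : ∀ f, G.Incident w f → s f ≠ 0 := by
      intro f hf h0
      have hsq := hs_sq f hf
      rw [h0, mul_zero] at hsq
      exact absurd hsq (by decide)
    have hss₁ : s e₁ * s e₁ = 1 := hs_sq e₁ hi₁
    have hss₂ : s e₂ * s e₂ = 1 := hs_sq e₂ hi₂
    have hx12 : x w e₁ ≠ 0 := by
      intro h1
      have h2 : x w e₂ = 0 := by
        rw [h1, mul_zero, zero_add] at hL3
        rcases mul_eq_zero.mp hL3 with h | h
        · exact absurd h (hs_ne e₂ hi₂)
        · exact h
      apply hw; funext f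
      by_cases hfm : f ∈ ({e, e₁, e₂} : Finset G.E)
      · simp only [Finset.mem_insert, Finset.mem_singleton] at hfm
        rcases hfm with rfl | rfl | rfl
        exacts [hxe0, h1, h2]
      · exact hxsupp f hfm
    have hx22 : x w e₂ ≠ 0 := by
      intro h2
      rw [h2, mul_zero, add_zero] at hL3
      rcases mul_eq_zero.mp hL3 with h | h
      · exact absurd h (hs_ne e₁ hi₁)
      · exact hx12 h
    have hx₁v := hval _ hx12
    have hx₂v := hval _ hx22
    have hs₁ : s e₁ = 1 ∨ s e₁ = -1 := hval _ (hs_ne e₁ hi₁)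
    by_cases hcase : x w e₁ = s e₁
    · have ht : s e₂ * x w e₂ = -1 := by
        rw [hcase, hss₁] at hL3
        exact eq_neg_of_add_eq_zero_right hL3
      have hx2e : x w e₂ = -(s e₂) := by
        calc x w e₂ = (s e₂ * s e₂) * x w e₂ := by rw [hss₂, one_mul]
          _ = s e₂ * (s e₂ * x w e₂) := by ring
          _ = s e₂ * (-1) := by rw [ht]
          _ = -(s e₂) := by ring
      refine ⟨e₁, e₂, hne, he₁e, he₂e, hi₁, hi₂, ?_⟩
      funext f
      unfold MultiGraph.deltaPair
      split_ifs with h h'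
      · subst h; exact hcase
      · subst h'; exact hx2e
      · by_cases hfe : f = e
        · subst hfe; exact hxe0
        · exact hxsupp f (by simp [hfe, h, h'])
    · have hx1e : x w e₁ = -(s e₁) := by
        rcases hs₁ with h | h <;> rcases hx₁v with h' | h' <;> rw [h', h] <;>
          first
            | decide
            | exact absurd (h'.trans h.symm) hcase
      have ht : s e₂ * x w e₂ = 1 := by
        rw [hx1e] at hL3
        have hneg : s e₁ * -(s e₁) = -1 := by rw [mul_neg, hss₁]
        rw [hneg] at hL3
        have := eq_neg_of_add_eq_zero_right hL3
        simpa using this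
      have hx2e : x w e₂ = s e₂ := by
        calc x w e₂ = (s e₂ * s e₂) * x w e₂ := by rw [hss₂, one_mul]
          _ = s e₂ * (s e₂ * x w e₂) := by ring
          _ = s e₂ * 1 := by rw [ht]
          _ = s e₂ := mul_one _
      refine ⟨e₂, e₁, Ne.symm hne, he₂e, he₁e, hi₂, hi₁, ?_⟩
      funext f
      unfold MultiGraph.deltaPair
      split_ifs with h h'
      · subst h; exact hx2e
      · subst h'; exact hx1e
      · by_cases hfe : f = e
        · subst hfe; exact hxe0
        · exact hxsupp f (by simp [hfe, h, h'])
end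

section
/- If an n-vertex ℤ/3-flow-critical graph F ≠ K₂ satisfies: δ(F) ≥ 3, and the set S of its degree-3 vertices induces a forest, then |E(F)| ≥ (8n+1)/5. -/
open Finset

namespace MultiGraph

/-- The degree of `v` counted within a set `F` of edges (loops twice). -/
def degIn (G : MultiGraph) (F : Finset G.E) (v : G.V) : ℕ :=
  (F.filter fun e => G.tail e = v).card + (F.filter fun e => G.head e = v).card

end MultiGraph

/-! Let `S` be the set of degree-3 vertices. Since all other vertices have degree at least four,
`2|E| ≥ 4n - |S|`; since an edge has two ends in `S` only if it lies in `F[S]`,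
`3|S| ≤ |E| + |E(F[S])|`. If `S ≠ ∅`, the forest `F[S]` has `|E(F[S])| ≤ |S| - 1`, so
`|E| ≥ 2|S| + 1`, and eliminating `|S|` gives `5|E| ≥ 8n + 1`. If `S = ∅`, then
`|E| ≥ 2n > (8n + 1)/5` as `n ≥ 1`. -/

namespace MultiGraph

variable (G : MultiGraph)

/-- The number of ends of `e` at `v`: `2` for a loop at `v`. -/
def incidence (e : G.E) (v : G.V) : ℕ :=
  (if G.tail e = v then 1 else 0) + (if G.head e = v then 1 else 0)

/-- The edge set of the induced subgraph `G[S]`. -/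
def edgesWithin (S : Finset G.V) : Finset G.E :=
  univ.filter fun e => G.tail e ∈ S ∧ G.head e ∈ S

def support (T : Finset G.E) : Finset G.V :=
  univ.filter fun v => 0 < G.degIn T v

/-- A cycle, a loop included, has no vertex of `degIn` one. -/
def IsForest (T : Finset G.E) : Prop :=
  ∀ T' ⊆ T, T'.Nonempty → ∃ v, G.degIn T' v = 1

variable {G}

theorem degIn_eq_sum_incidence (T : Finset G.E) (v : G.V) :
    G.degIn T v = ∑ e ∈ T, G.incidence e v := by
  simp only [degIn, incidence, card_filter, sum_add_distrib]

theorem degree_eq_sum_incidence (v : G.V) : G.degree v = ∑ e, G.incidence e v :=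
  degIn_eq_sum_incidence univ v

theorem sum_incidence (e : G.E) (S : Finset G.V) :
    ∑ v ∈ S, G.incidence e v =
      (if G.tail e ∈ S then 1 else 0) + (if G.head e ∈ S then 1 else 0) := by
  simp only [incidence, sum_add_distrib, sum_ite_eq]

theorem degIn_erase_add {T : Finset G.E} {e : G.E} (he : e ∈ T) (v : G.V) :
    G.degIn (T.erase e) v + G.incidence e v = G.degIn T v := by
  simp only [degIn_eq_sum_incidence, sum_erase_add _ _ he]

theorem sum_degree_eq_two_mul_card : ∑ v, G.degree v = 2 * Fintype.card G.E := by
  simp only [degree_eq_sum_incidence]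
  rw [sum_comm]
  simp [sum_incidence, mul_comm]

theorem sum_degree_le_card_add_card_edgesWithin (S : Finset G.V) :
    ∑ v ∈ S, G.degree v ≤ Fintype.card G.E + (G.edgesWithin S).card := by
  simp only [degree_eq_sum_incidence]
  rw [sum_comm, edgesWithin, card_filter, ← card_univ, card_eq_sum_ones, ← sum_add_distrib]
  refine sum_le_sum fun e _ => ?_
  rw [sum_incidence]
  split_ifs <;> simp_all

theorem IsForest.mono {T T' : Finset G.E} (hT : G.IsForest T) (h : T' ⊆ T) :
    G.IsForest T' :=
  fun T'' h' => hT T'' (h'.trans h)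

theorem IsForest.card_lt_card_support {T : Finset G.E} (hT : G.IsForest T)
    (hne : T.Nonempty) : T.card < (G.support T).card := by
  induction T using Finset.strongInduction with
  | H T ih =>
  obtain ⟨v, hv⟩ := hT T Subset.rfl hne
  obtain ⟨e, heT, hev⟩ : ∃ e ∈ T, 0 < G.incidence e v := by
    by_contra! h
    rw [degIn_eq_sum_incidence, sum_eq_zero fun e he => Nat.le_zero.mp (h e he)] at hv
    exact zero_ne_one hv
  have hsplit := degIn_erase_add heT
  have hv₀ : G.degIn (T.erase e) v = 0 := by
    have := hsplit v
    omega
  have hev₁ : G.incidence e v = 1 := by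
    have := hsplit v
    omega
  have mem_support : ∀ u, 0 < G.incidence e u → u ∈ G.support T := fun u hu => by
    simpa [support, ← hsplit u] using Or.inr hu
  rcases (T.erase e).eq_empty_or_nonempty with hT₁ | hT₁
  · -- `T = {e}`, and `e` is not a loop since it has exactly one end at the leaf `v`
    have hloop : G.tail e ≠ G.head e := fun h => by
      rw [incidence, h] at hev₁
      split_ifs at hev₁ <;> omega
    rw [← card_erase_add_one heT, hT₁, card_empty, zero_add, one_lt_card]
    exact ⟨_, mem_support _ (by simp [incidence]), _, mem_support _ (by simp [incidence]),
      hloop⟩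
  · have hsub : G.support (T.erase e) ⊆ (G.support T).erase v := by
      intro u hu
      simp only [support, mem_filter, mem_univ, true_and] at hu
      refine mem_erase.mpr ⟨?_, ?_⟩
      · rintro rfl
        omega
      · simpa [support, ← hsplit u] using Or.inl hu
    have := ih _ (erase_ssubset heT) (hT.mono (erase_subset e T)) hT₁
    have := card_le_card hsub
    rw [card_erase_of_mem (mem_support v hev)] at this
    rw [← card_erase_add_one heT]
    omega

theorem IsForest.card_edgesWithin_lt {S : Finset G.V} (hS : S.Nonempty)
    (hT : G.IsForest (G.edgesWithin S)) : (G.edgesWithin S).card < S.card := by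
  rcases (G.edgesWithin S).eq_empty_or_nonempty with h | h
  · simpa [h] using hS
  refine (hT.card_lt_card_support h).trans_le (card_le_card fun v hv => ?_)
  simp only [support, mem_filter, mem_univ, true_and, degIn_eq_sum_incidence,
    sum_pos_iff] at hv
  obtain ⟨e, he, hev⟩ := hv
  simp only [edgesWithin, mem_filter, mem_univ, true_and] at he
  simp only [incidence] at hev
  split_ifs at hev <;> simp_all

theorem four_mul_card_V_le (hmin : ∀ v, 3 ≤ G.degree v) :
    4 * Fintype.card G.V ≤ 2 * Fintype.card G.E + (univ.filter (G.degree · = 3)).card := by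
  rw [← sum_degree_eq_two_mul_card, card_filter, ← sum_add_distrib, ← card_univ,
    card_eq_sum_ones, mul_sum]
  refine sum_le_sum fun v _ => ?_
  have := hmin v
  split_ifs <;> omega

end MultiGraph

open MultiGraph in
theorem edges_ge_eight_fifths_general (F : MultiGraph)
    (hF : F.FlowCritical (ZMod 3))
    (hmin : ∀ v : F.V, 3 ≤ F.degree v)
    (hforest : ∀ T : Finset F.E, T.Nonempty →
      (∀ e ∈ T, F.degree (F.tail e) = 3 ∧ F.degree (F.head e) = 3) →
      ∃ v : F.V, F.degree v = 3 ∧ F.degIn T v = 1) :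
    5 * Fintype.card F.E ≥ 8 * Fintype.card F.V + 1 := by
  set S := univ.filter (F.degree · = 3)
  have hS : F.IsForest (F.edgesWithin S) := fun T hT hne => by
    obtain ⟨v, -, hv⟩ := hforest T hne fun e he => by
      simpa [S, edgesWithin] using hT he
    exact ⟨v, hv⟩
  have hdeg : 4 * Fintype.card F.V ≤ 2 * Fintype.card F.E + S.card := F.four_mul_card_V_le hmin
  have hcount : 3 * S.card ≤ Fintype.card F.E + (F.edgesWithin S).card := by
    calc 3 * S.card = ∑ v ∈ S, F.degree v := by
          rw [sum_congr rfl fun v hv => (mem_filter.mp hv).2, sum_const, smul_eq_mul, mul_comm]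
      _ ≤ _ := F.sum_degree_le_card_add_card_edgesWithin S
  have hn : 0 < Fintype.card F.V := Fintype.card_pos_iff.mpr hF.1.1
  rcases S.eq_empty_or_nonempty with hS₀ | hS₀
  · rw [hS₀, card_empty] at hdeg
    omega
  · have := hS.card_edgesWithin_lt hS₀
    omega

open MultiGraph in
/-- If an `n`-vertex `ℤ/3`-flow-critical graph `F ≠ K₂` has minimum degree at
least three and its set `S` of degree-3 vertices induces a forest (every
nonempty set of edges with both endpoints in `S` has a vertex incident to
exactly one of them), then `|E(F)| ≥ (8n+1)/5`. -/
theorem edges_ge_eight_fifths (F : MultiGraph)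
    (hF : F.FlowCritical (ZMod 3)) (hK2 : ¬ Iso F K2)
    (hmin : ∀ v : F.V, 3 ≤ F.degree v)
    (hforest : ∀ T : Finset F.E, T.Nonempty →
      (∀ e ∈ T, F.degree (F.tail e) = 3 ∧ F.degree (F.head e) = 3) →
      ∃ v : F.V, F.degree v = 3 ∧ F.degIn T v = 1) :
    5 * Fintype.card F.E ≥ 8 * Fintype.card F.V + 1 :=
  edges_ge_eight_fifths_general F hF hmin hforest
end
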